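/- arXiv:1411.3534 — 4 statements merged into one kernel-verified Lean document; each statement's English description precedes it below -/
import Mathlib

section
/- For every r ≥ 1 and all natural numbers v, e, f, the number of transitive pairs (σ,τ) ∈ S_r × S_r with cyc(σ) = v, cyc(τ) = e and cyc((στ)⁻¹) = f is a totally symmetric function of (v, e, f); that is, it is unchanged under any permutation of the triple (v, e, f). Consequently the number H_{vefr} of rooted hypermaps with v vertices, e edges, f faces and r darts satisfies H_{vefr} = H_{vfer} = H_{evfr}. -/
/-- Number of cycles of a permutation, counting fixed points as cycles of length 1. -/
def cyc {r : ℕ} (σ : Equiv.Perm (Fin r)) : ℕ :=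
  σ.cycleType.card + (Finset.univ.filter fun x => σ x = x).card

/-- A pair of permutations is transitive if the subgroup they generate acts
transitively on `Fin r`. -/
def IsTransitivePair {r : ℕ} (σ τ : Equiv.Perm (Fin r)) : Prop :=
  ∀ x y : Fin r, ∃ g ∈ Subgroup.closure ({σ, τ} : Set (Equiv.Perm (Fin r))), g x = y

/-- The number of transitive pairs `(σ, τ) ∈ S_r × S_r` with `cyc σ = v`,
`cyc τ = e` and `cyc ((στ)⁻¹) = f`. -/
noncomputable def transPairCount (r v e f : ℕ) : ℕ :=
  Nat.card {p : Equiv.Perm (Fin r) × Equiv.Perm (Fin r) //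
    IsTransitivePair p.1 p.2 ∧ cyc p.1 = v ∧ cyc p.2 = e ∧ cyc (p.1 * p.2)⁻¹ = f}

/-- The number of rooted hypermaps with `v` vertices, `e` edges, `f` faces and
`r` darts: the number of transitive pairs with the given cycle data, divided by `(r-1)!`. -/
noncomputable def Hcount (r v e f : ℕ) : ℚ :=
  (transPairCount r v e f : ℚ) / (r - 1).factorial

/-!
The maps `(σ, τ) ↦ (τ, σ)` and `(σ, τ) ↦ (σ⁻¹, στ)` are involutions of `S_r × S_r` that do not
change the subgroup generated by the pair. Since `cyc` only depends on the cycle type, which is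
invariant under inversion and conjugation, the first exchanges the vertex and edge counts
(`(τσ)⁻¹` is conjugate to `(στ)⁻¹`) and the second exchanges the edge and face counts
(`(σ⁻¹ · στ)⁻¹ = τ⁻¹`). These two transpositions generate all permutations of `(v, e, f)`.
-/

open Equiv

theorem cyc_eq_card_cycleType_add_sub_sum {r : ℕ} (σ : Perm (Fin r)) :
    cyc σ = σ.cycleType.card + (r - σ.cycleType.sum) := by
  have hcompl := Finset.card_compl σ.support
  rw [Fintype.card_fin] at hcompl
  rw [cyc, Perm.sum_cycleType, ← hcompl]
  congr 2
  ext x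
  simp [Perm.mem_support]

theorem cyc_eq_of_cycleType_eq {r : ℕ} {σ τ : Perm (Fin r)} (h : σ.cycleType = τ.cycleType) :
    cyc σ = cyc τ := by
  rw [cyc_eq_card_cycleType_add_sub_sum, cyc_eq_card_cycleType_add_sub_sum, h]

theorem Subgroup.closure_pair_inv_mul {G : Type*} [Group G] (a b : G) :
    closure {a⁻¹, a * b} = closure {a, b} := by
  apply le_antisymm <;> rw [closure_le, Set.insert_subset_iff, Set.singleton_subset_iff]
  · have ha : a ∈ closure {a, b} := subset_closure (by simp)
    have hb : b ∈ closure {a, b} := subset_closure (by simp)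
    exact ⟨inv_mem ha, mul_mem ha hb⟩
  · have ha : a⁻¹ ∈ closure {a⁻¹, a * b} := subset_closure (by simp)
    have hab : a * b ∈ closure {a⁻¹, a * b} := subset_closure (by simp)
    exact ⟨by simpa using inv_mem ha, by simpa using mul_mem ha hab⟩

theorem isTransitivePair_congr {r : ℕ} {σ τ σ' τ' : Perm (Fin r)}
    (h : Subgroup.closure {σ, τ} = Subgroup.closure {σ', τ'}) :
    IsTransitivePair σ τ ↔ IsTransitivePair σ' τ' := by
  rw [IsTransitivePair, IsTransitivePair, h]

@[simps]
def prodInvMulEquiv (G : Type*) [Group G] : G × G ≃ G × G where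
  toFun p := (p.1⁻¹, p.1 * p.2)
  invFun p := (p.1⁻¹, p.1 * p.2)
  left_inv p := by simp
  right_inv p := by simp

theorem transPairCount_vertex_edge_comm (r v e f : ℕ) :
    transPairCount r v e f = transPairCount r e v f :=
  Nat.card_congr <| (prodComm _ _).subtypeEquiv fun ⟨σ, τ⟩ => by
    have hconj : (τ * σ)⁻¹ = σ⁻¹ * (σ * τ)⁻¹ * σ⁻¹⁻¹ := by group
    have hface : cyc (τ * σ)⁻¹ = cyc (σ * τ)⁻¹ := cyc_eq_of_cycleType_eq <| by
      rw [hconj, Perm.cycleType_conj]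
    have hclosure : Subgroup.closure {σ, τ} = Subgroup.closure {τ, σ} := by
      rw [Set.pair_comm]
    simp only [prodComm_apply, Prod.swap_prod_mk, hface, isTransitivePair_congr hclosure]
    tauto

theorem transPairCount_edge_face_comm (r v e f : ℕ) :
    transPairCount r v e f = transPairCount r v f e :=
  Nat.card_congr <| (prodInvMulEquiv _).subtypeEquiv fun ⟨σ, τ⟩ => by
    have hvert : cyc σ⁻¹ = cyc σ := cyc_eq_of_cycleType_eq σ.cycleType_inv
    have hedge : cyc (σ * τ) = cyc (σ * τ)⁻¹ := cyc_eq_of_cycleType_eq (σ * τ).cycleType_inv.symm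
    have hface : cyc (σ⁻¹ * (σ * τ))⁻¹ = cyc τ := cyc_eq_of_cycleType_eq <| by
      rw [inv_mul_cancel_left, Perm.cycleType_inv]
    simp only [prodInvMulEquiv_apply, hvert, hedge, hface,
      isTransitivePair_congr (Subgroup.closure_pair_inv_mul σ τ).symm]
    tauto

theorem transPairCount_symmetric_general (r : ℕ) (v e f : ℕ) :
    (transPairCount r v e f = transPairCount r v f e ∧
      transPairCount r v e f = transPairCount r e v f) ∧
    Hcount r v e f = Hcount r v f e ∧ Hcount r v e f = Hcount r e v f := by
  refine ⟨⟨transPairCount_edge_face_comm r v e f, transPairCount_vertex_edge_comm r v e f⟩, ?_, ?_⟩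
  · rw [Hcount, Hcount, transPairCount_edge_face_comm]
  · rw [Hcount, Hcount, transPairCount_vertex_edge_comm]

theorem transPairCount_symmetric (r : ℕ) (hr : 1 ≤ r) (v e f : ℕ) :
    (transPairCount r v e f = transPairCount r v f e ∧
      transPairCount r v e f = transPairCount r e v f) ∧
    Hcount r v e f = Hcount r v f e ∧ Hcount r v e f = Hcount r e v f :=
  transPairCount_symmetric_general r v e f
end

section
/- For every r ≥ 0 and all natural numbers m, n, λ, one has Σ_{k=0}^{r} H_{r−k}(m,n,λ)·F_k(m,n,λ) = r·F_r(m,n,λ) (the coefficient form of the identity H(m,n,λ;x)·F(m,n,λ;x) = x·∂F(m,n,λ;x)/∂x of formal power series). Equivalently, in integer form: for every r ≥ 1, f_r(m,n,λ) = Σ_{k=0}^{r−1} C(r−1,k) · h_{r−k}(m,n,λ) · f_k(m,n,λ), where C(r−1,k) is the binomial coefficient. -/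
/-!
Sort the pairs `(σ, τ)` on `Fin r` by the orbit `S` of `0` under `⟨σ, τ⟩`. Both permutations
preserve `S`, so such a pair is a transitive pair on `S` glued to an arbitrary pair on the
complement, and the weight `m ^ cyc σ * n ^ cyc τ * λ ^ cyc (στ)⁻¹` is multiplicative under this
gluing because the cycles of a glued permutation are those of its two pieces. Summing over `S`
gives `h_{#S} f_{r - #S}`, and there are `C(r - 1, k)` orbits containing `0` with `#S = r - k`.
-/

open Finset

/-- `f_r(m,n,λ) = Σ_{(σ,τ) ∈ S_r × S_r} m^{cyc σ} n^{cyc τ} λ^{cyc((στ)⁻¹)}`,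
summed over all pairs; for `r = 0` this sum is `1`. -/
def fSum (r m n lam : ℕ) : ℕ :=
  ∑ σ : Equiv.Perm (Fin r), ∑ τ : Equiv.Perm (Fin r),
    m ^ cyc σ * n ^ cyc τ * lam ^ cyc (σ * τ)⁻¹

open Classical in
/-- `h_r(m,n,λ)`: the same sum restricted to transitive pairs, with `h_0 = 0`. -/
noncomputable def hSum (r m n lam : ℕ) : ℕ :=
  if r = 0 then 0 else
    ∑ p ∈ Finset.univ.filter
        (fun p : Equiv.Perm (Fin r) × Equiv.Perm (Fin r) => IsTransitivePair p.1 p.2),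
      m ^ cyc p.1 * n ^ cyc p.2 * lam ^ cyc (p.1 * p.2)⁻¹

namespace Equiv.Perm

variable {α β : Type*}

lemma subtypeCongr_eq_ofSubtype_mul {p : α → Prop} [DecidablePred p] (a : Perm (Subtype p))
    (c : Perm {x // ¬ p x}) : a.subtypeCongr c = ofSubtype a * ofSubtype c := by
  ext x
  by_cases hx : p x
  · rw [subtypeCongr.left_apply _ _ hx, mul_apply, ofSubtype_apply_of_not_mem c (not_not.mpr hx),
      ofSubtype_apply_of_mem a hx]
  · rw [subtypeCongr.right_apply _ _ hx, mul_apply, ofSubtype_apply_of_mem c hx,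
      ofSubtype_apply_of_not_mem a (c ⟨x, hx⟩).2]

variable [Fintype α] [DecidableEq α] [Fintype β] [DecidableEq β]

/-- `cyc` on an arbitrary finite type; on `Fin r` it is `cyc` by `rfl`. -/
def cycleCount (σ : Perm α) : ℕ :=
  σ.cycleType.card + #{x | σ x = x}

lemma cycleCount_eq (σ : Perm α) :
    σ.cycleCount = σ.cycleType.card + (Fintype.card α - σ.cycleType.sum) := by
  rw [cycleCount, sum_cycleType, ← card_compl]
  congr 3
  ext x
  simp

lemma cycleType_permCongrHom (e : α ≃ β) (σ : Perm α) :
    (e.permCongrHom σ).cycleType = σ.cycleType := by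
  have : e.permCongrHom σ = σ.extendDomain (e.trans (subtypeUnivEquiv fun _ => trivial).symm) := by
    ext x
    rw [extendDomain_apply_subtype _ _ trivial]
    simp [permCongr_apply]
  rw [this, cycleType_extendDomain]

lemma cycleCount_permCongrHom (e : α ≃ β) (σ : Perm α) :
    (e.permCongrHom σ).cycleCount = σ.cycleCount := by
  rw [cycleCount_eq, cycleCount_eq, cycleType_permCongrHom, Fintype.card_congr e]

section subtypeCongr

variable {p : α → Prop} [DecidablePred p] [Fintype (Subtype p)] [Fintype {x // ¬ p x}]

lemma cycleType_subtypeCongr (a : Perm (Subtype p)) (c : Perm {x // ¬ p x}) :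
    (a.subtypeCongr c).cycleType = a.cycleType + c.cycleType := by
  have hdisj : Disjoint (ofSubtype a) (ofSubtype c) := fun x => by
    by_cases hx : p x
    · exact .inr (ofSubtype_apply_of_not_mem _ (not_not.mpr hx))
    · exact .inl (ofSubtype_apply_of_not_mem _ hx)
  rw [subtypeCongr_eq_ofSubtype_mul, hdisj.cycleType_mul, cycleType_ofSubtype, cycleType_ofSubtype]

lemma cycleCount_subtypeCongr (a : Perm (Subtype p)) (c : Perm {x // ¬ p x}) :
    (a.subtypeCongr c).cycleCount = a.cycleCount + c.cycleCount := by
  have ha := a.sum_cycleType_le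
  have hc := c.sum_cycleType_le
  have hcard : Fintype.card (Subtype p) + Fintype.card {x // ¬ p x} = Fintype.card α := by
    rw [← Fintype.card_sum]
    exact Fintype.card_congr (sumCompl p)
  simp only [cycleCount_eq, cycleType_subtypeCongr, Multiset.card_add, Multiset.sum_add]
  omega

end subtypeCongr

end Equiv.Perm

open Equiv Equiv.Perm MulAction

lemma map_closure_pair {G K : Type*} [Group G] [Group K] (φ : G →* K) (a b : G) :
    (Subgroup.closure {a, b}).map φ = Subgroup.closure {φ a, φ b} := by
  rw [MonoidHom.map_closure, Set.image_pair]

section Orbit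

variable {α β : Type*}

lemma mem_orbit_subgroup_perm_iff {H : Subgroup (Perm α)} {x y : α} :
    y ∈ orbit H x ↔ ∃ g ∈ H, g x = y := by
  simp only [mem_orbit_iff, Subtype.exists, Subgroup.mk_smul, Perm.smul_def, exists_prop]

lemma isPretransitive_subgroup_perm_iff {H : Subgroup (Perm α)} :
    IsPretransitive H α ↔ ∀ x y : α, ∃ g ∈ H, g x = y := by
  simp only [← mem_orbit_subgroup_perm_iff]
  exact ⟨fun h x y => mem_orbit_iff.2 (h.exists_smul_eq x y),
    fun h => ⟨fun x y => mem_orbit_iff.1 (h x y)⟩⟩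

lemma isTransitivePair_iff {r : ℕ} {σ τ : Perm (Fin r)} :
    IsTransitivePair σ τ ↔ IsPretransitive (Subgroup.closure {σ, τ}) (Fin r) :=
  isPretransitive_subgroup_perm_iff.symm

lemma apply_mem_orbit_subgroup_perm_iff {H : Subgroup (Perm α)} {g : Perm α} (hg : g ∈ H)
    {x y : α} : g y ∈ orbit H x ↔ y ∈ orbit H x := by
  rw [← orbit_eq_iff, ← orbit_eq_iff]
  exact iff_of_eq (congrArg (· = orbit H x) (orbit_smul (⟨g, hg⟩ : H) y))

lemma isPretransitive_closure_permCongrHom (e : α ≃ β) (σ τ : Perm α) :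
    IsPretransitive (Subgroup.closure {e.permCongrHom σ, e.permCongrHom τ}) β ↔
      IsPretransitive (Subgroup.closure {σ, τ}) α := by
  have hcl : Subgroup.closure {e.permCongrHom σ, e.permCongrHom τ} =
      (Subgroup.closure {σ, τ}).map e.permCongrHom.toMonoidHom := by
    rw [map_closure_pair]; rfl
  simp only [hcl, isPretransitive_subgroup_perm_iff, Subgroup.mem_map, exists_exists_and_eq_and]
  constructor
  · intro h x y
    obtain ⟨g, hg, hgxy⟩ := h (e x) (e y)
    exact ⟨g, hg, by simpa [permCongrHom] using hgxy⟩
  · intro h x y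
    obtain ⟨g, hg, hgxy⟩ := h (e.symm x) (e.symm y)
    exact ⟨g, hg, by simp [permCongrHom, hgxy]⟩

end Orbit

section SubtypeCongr

variable {α : Type*} {p : α → Prop} [DecidablePred p]

lemma exists_subtypeCongr_eq {σ : Perm α} (h : ∀ x, p (σ x) ↔ p x) :
    ∃ (a : Perm (Subtype p)) (c : Perm {x // ¬ p x}), a.subtypeCongr c = σ := by
  refine ⟨σ.subtypePerm h, σ.subtypePerm fun x => not_congr (h x), ?_⟩
  ext x
  by_cases hx : p x
  · rw [subtypeCongr.left_apply _ _ hx, subtypePerm_apply]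
  · rw [subtypeCongr.right_apply _ _ hx, subtypePerm_apply]

lemma mem_orbit_closure_subtypeCongr_iff (a b : Perm (Subtype p)) (c d : Perm {x // ¬ p x})
    {x y : α} (hx : p x) :
    y ∈ orbit (Subgroup.closure {a.subtypeCongr c, b.subtypeCongr d}) x ↔
      ∃ hy : p y,
        (⟨y, hy⟩ : Subtype p) ∈ orbit (Subgroup.closure {a, b}) (⟨x, hx⟩ : Subtype p) := by
  set K : Subgroup (Perm (Subtype p) × Perm {x // ¬ p x}) := Subgroup.closure {(a, c), (b, d)}
  have hcl :
      Subgroup.closure {a.subtypeCongr c, b.subtypeCongr d} = K.map (subtypeCongrHom p) := by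
    rw [map_closure_pair]; rfl
  have hcl₁ : Subgroup.closure {a, b} = K.map (MonoidHom.fst _ _) := by
    rw [map_closure_pair]; rfl
  simp only [hcl, hcl₁, mem_orbit_subgroup_perm_iff, Subgroup.mem_map, exists_exists_and_eq_and,
    subtypeCongrHom_apply, subtypeCongr.left_apply _ _ hx, MonoidHom.coe_fst]
  constructor
  · rintro ⟨k, hk, rfl⟩
    exact ⟨(k.1 ⟨x, hx⟩).2, k, hk, rfl⟩
  · rintro ⟨hy, k, hk, hky⟩
    exact ⟨k, hk, by rw [hky]⟩

end SubtypeCongr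

section PairWeight

variable {α β : Type*} [Fintype α] [DecidableEq α] [Fintype β] [DecidableEq β]

def pairWeight (m n lam : ℕ) (p : Perm α × Perm α) : ℕ :=
  m ^ p.1.cycleCount * n ^ p.2.cycleCount * lam ^ (p.1 * p.2)⁻¹.cycleCount

lemma pairWeight_permCongrHom (m n lam : ℕ) (e : α ≃ β) (p : Perm α × Perm α) :
    pairWeight m n lam (e.permCongrHom p.1, e.permCongrHom p.2) = pairWeight m n lam p := by
  simp only [pairWeight, ← map_mul, ← map_inv, cycleCount_permCongrHom]

lemma pairWeight_subtypeCongr (m n lam : ℕ) {q : α → Prop} [DecidablePred q]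
    [Fintype (Subtype q)] [Fintype {x // ¬ q x}]
    (a b : Perm (Subtype q)) (c d : Perm {x // ¬ q x}) :
    pairWeight m n lam (a.subtypeCongr c, b.subtypeCongr d) =
      pairWeight m n lam (a, b) * pairWeight m n lam (c, d) := by
  have hmul : a.subtypeCongr c * b.subtypeCongr d = (a * b).subtypeCongr (c * d) :=
    ((subtypeCongrHom q).map_mul (a, c) (b, d)).symm
  have hinv : ((a * b).subtypeCongr (c * d))⁻¹ = (a * b)⁻¹.subtypeCongr (c * d)⁻¹ :=
    ((subtypeCongrHom q).map_inv (a * b, c * d))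
  simp only [pairWeight, hmul, hinv, cycleCount_subtypeCongr, pow_add]
  ring

lemma fSum_eq_sum_pairWeight (r m n lam : ℕ) :
    fSum r m n lam = ∑ p : Perm (Fin r) × Perm (Fin r), pairWeight m n lam p := by
  rw [fSum, Fintype.sum_prod_type]
  rfl

lemma sum_pairWeight_eq_fSum (m n lam : ℕ) {k : ℕ} (h : Fintype.card β = k) :
    ∑ p : Perm β × Perm β, pairWeight m n lam p = fSum k m n lam := by
  let e := (Fintype.equivFinOfCardEq h).permCongrHom.toEquiv
  rw [fSum_eq_sum_pairWeight]
  exact Fintype.sum_equiv (e.prodCongr e) _ _ fun p => (pairWeight_permCongrHom m n lam _ p).symm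

open Classical in
lemma sum_pairWeight_filter_isPretransitive_eq_hSum (m n lam : ℕ) {k : ℕ}
    (h : Fintype.card β = k) (hk : k ≠ 0) :
    ∑ p : Perm β × Perm β with IsPretransitive (Subgroup.closure {p.1, p.2}) β,
      pairWeight m n lam p = hSum k m n lam := by
  let e := (Fintype.equivFinOfCardEq h).permCongrHom.toEquiv
  rw [hSum, if_neg hk]
  refine sum_equiv (e.prodCongr e) (fun p => ?_) fun p _ =>
    (pairWeight_permCongrHom m n lam _ p).symm
  simp only [mem_filter, mem_univ, true_and, isTransitivePair_iff]
  exact (isPretransitive_closure_permCongrHom _ _ _).symm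

end PairWeight

section PairOrbit

variable {α : Type*} [Fintype α]

open Classical in
noncomputable def pairOrbit (x : α) (p : Perm α × Perm α) : Finset α :=
  {y | y ∈ orbit (Subgroup.closure {p.1, p.2}) x}

lemma mem_pairOrbit {x y : α} {p : Perm α × Perm α} :
    y ∈ pairOrbit x p ↔ y ∈ orbit (Subgroup.closure {p.1, p.2}) x := by
  simp [pairOrbit]

variable [DecidableEq α]

lemma pairOrbit_subtypeCongr_eq_iff {S : Finset α} {x : α} (hx : x ∈ S)
    (a b : Perm S) (c d : Perm {y // y ∉ S}) :
    pairOrbit x (a.subtypeCongr c, b.subtypeCongr d) = S ↔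
      IsPretransitive (Subgroup.closure {a, b}) S := by
  rw [isPretransitive_iff_orbit_eq_univ ⟨x, hx⟩, Finset.ext_iff, Set.eq_univ_iff_forall]
  simp only [mem_pairOrbit, mem_orbit_closure_subtypeCongr_iff _ _ _ _ hx]
  constructor
  · intro h z
    obtain ⟨_, hz⟩ := (h z).2 z.2
    exact hz
  · intro h y
    exact ⟨fun ⟨hy, _⟩ => hy, fun hy => ⟨hy, h ⟨y, hy⟩⟩⟩

open Classical in
lemma sum_pairWeight_filter_pairOrbit_eq (m n lam : ℕ) {S : Finset α} {x : α} (hx : x ∈ S) :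
    ∑ p with pairOrbit x p = S, pairWeight m n lam p =
      (∑ q : Perm S × Perm S with IsPretransitive (Subgroup.closure {q.1, q.2}) S,
          pairWeight m n lam q) *
        ∑ u : Perm {y // y ∉ S} × Perm {y // y ∉ S}, pairWeight m n lam u := by
  rw [sum_mul_sum, ← sum_product']
  symm
  refine sum_nbij (fun q => (q.1.1.subtypeCongr q.2.1, q.1.2.subtypeCongr q.2.2)) ?_ ?_ ?_ ?_
  · rintro ⟨⟨a, b⟩, c, d⟩ hq
    simp only [mem_product, mem_filter, mem_univ, true_and, and_true] at hq ⊢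
    exact (pairOrbit_subtypeCongr_eq_iff hx a b c d).2 hq
  · rintro ⟨⟨a, b⟩, c, d⟩ - ⟨⟨a', b'⟩, c', d'⟩ - h
    simp only [Prod.mk.injEq] at h
    obtain ⟨hac, hbd⟩ := h
    obtain ⟨rfl, rfl⟩ := Prod.ext_iff.1
      (subtypeCongrHom_injective (· ∈ S) (a₁ := (a, c)) (a₂ := (a', c')) hac)
    obtain ⟨rfl, rfl⟩ := Prod.ext_iff.1
      (subtypeCongrHom_injective (· ∈ S) (a₁ := (b, d)) (a₂ := (b', d')) hbd)
    rfl
  · rintro ⟨σ, τ⟩ hp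
    simp only [coe_filter, mem_univ, true_and, Set.mem_ofPred_eq] at hp
    have hinv : ∀ g ∈ ({σ, τ} : Set (Perm α)), ∀ y, g y ∈ S ↔ y ∈ S := fun g hg y => by
      simp only [← hp, mem_pairOrbit]
      exact apply_mem_orbit_subgroup_perm_iff (Subgroup.subset_closure hg)
    obtain ⟨a, c, rfl⟩ := exists_subtypeCongr_eq (hinv σ (by simp))
    obtain ⟨b, d, rfl⟩ := exists_subtypeCongr_eq (hinv τ (by simp))
    exact ⟨((a, b), (c, d)), by simpa using (pairOrbit_subtypeCongr_eq_iff hx a b c d).1 hp, rfl⟩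
  · rintro ⟨⟨a, b⟩, c, d⟩ -
    exact (pairWeight_subtypeCongr m n lam a b c d).symm

end PairOrbit

lemma sum_pairWeight_eq_sum_powerset {α : Type*} [Fintype α] [DecidableEq α]
    (m n lam : ℕ) (x : α) :
    ∑ p : Perm α × Perm α, pairWeight m n lam p =
      ∑ T ∈ (univ.erase x).powerset,
        hSum (#T + 1) m n lam * fSum (Fintype.card α - (#T + 1)) m n lam := by
  have hmaps : ∀ p ∈ (univ : Finset (Perm α × Perm α)),
      pairOrbit x p ∈ (univ.erase x).powerset.image (insert x) := fun p _ => by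
    have hx : x ∈ pairOrbit x p := mem_pairOrbit.2 (mem_orbit_self x)
    exact mem_image.2 ⟨_, mem_powerset.2 (erase_subset_erase x (subset_univ _)), insert_erase hx⟩
  have hnotMem : ∀ T ∈ (univ.erase x).powerset, x ∉ T := fun T hT h =>
    (mem_erase.1 (mem_powerset.1 hT h)).1 rfl
  have hinj : Set.InjOn (insert x) ((univ.erase x).powerset : Set (Finset α)) :=
    fun T hT T' hT' h => by
      rw [← erase_insert (hnotMem T hT), ← erase_insert (hnotMem T' hT'), h]
  rw [← sum_fiberwise_of_maps_to hmaps, sum_image hinj]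
  refine sum_congr rfl fun T hT => ?_
  have hxT : x ∉ T := hnotMem T hT
  have hcard : Fintype.card {y // y ∈ insert x T} = #T + 1 := by
    rw [Fintype.card_coe, card_insert_of_notMem hxT]
  have hcardCompl : Fintype.card {y // y ∉ insert x T} = Fintype.card α - (#T + 1) := by
    rw [Fintype.card_subtype_compl, hcard]
  rw [sum_pairWeight_filter_pairOrbit_eq m n lam (mem_insert_self x T),
    sum_pairWeight_filter_isPretransitive_eq_hSum m n lam hcard (Nat.succ_ne_zero _),
    sum_pairWeight_eq_fSum m n lam hcardCompl]

/-- Coefficient form of `H(m,n,λ;x) F(m,n,λ;x) = x ∂F/∂x`: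
for `r ≥ 1`, `f_r = Σ_{k=0}^{r-1} C(r-1,k) h_{r-k} f_k`. -/
theorem fSum_eq_sum_choose_hSum_fSum (r : ℕ) (hr : 1 ≤ r) (m n lam : ℕ) :
    fSum r m n lam =
      ∑ k ∈ Finset.range r, (r - 1).choose k * hSum (r - k) m n lam * fSum k m n lam := by
  rw [fSum_eq_sum_pairWeight, sum_pairWeight_eq_sum_powerset m n lam (⟨0, hr⟩ : Fin r),
    Fintype.card_fin,
    sum_powerset_apply_card (fun j => hSum (j + 1) m n lam * fSum (r - (j + 1)) m n lam),
    card_erase_of_mem (mem_univ _), card_univ, Fintype.card_fin, Nat.sub_add_cancel hr,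
    ← sum_range_reflect _ r]
  refine sum_congr rfl fun k hk => ?_
  have hk : k < r := mem_range.1 hk
  rw [smul_eq_mul, Nat.choose_symm (by omega), show r - 1 - k + 1 = r - k by omega,
    show r - (r - k) = k by omega, mul_assoc]
end

section
/- Let m ≥ 1 and let b_1,…,b_m be natural numbers. Then the determinant of the m×m matrix whose (i,j) entry (for 1 ≤ i,j ≤ m) is the factorial (b_j + i − 1)! equals ∏_{1 ≤ i < j ≤ m} (b_j − b_i) · ∏_{j=1}^{m} b_j!, as an identity of integers. (This is the evaluation of the paper's determinant Q = det[Γ(n−m+i+j−1+a_j)] = Δ(a_1+1,…,a_m+m)·∏_k Γ(n−m+a_k+k), proved by successive row operations.) -/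
open Finset Polynomial Matrix

private lemma prod_pairs_eq {m : ℕ} (f : Fin m → Fin m → ℤ) :
    (∏ p ∈ Finset.univ.filter (fun p : Fin m × Fin m => p.1 < p.2), f p.1 p.2) =
      ∏ i : Fin m, ∏ j ∈ Ioi i, f i j := by
  rw [Finset.prod_sigma']
  exact Finset.prod_nbij' (fun p => ⟨p.1, p.2⟩) (fun x => (x.1, x.2))
    (by simp) (by simp) (by simp) (by simp) (by simp)

/-- The determinant of the `m × m` matrix with `(i,j)` entry `(b_j + i - 1)!`
(indices running from 1 to m, i.e. entry `(b j + i)!` for `i j : Fin m`)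
equals `∏_{i<j} (b_j - b_i) · ∏_j b_j!`, as an identity of integers. -/
theorem det_factorial_matrix (m : ℕ) (hm : 1 ≤ m) (b : Fin m → ℕ) :
    Matrix.det (Matrix.of fun i j : Fin m => (((b j + (i : ℕ)).factorial : ℤ))) =
      (∏ p ∈ Finset.univ.filter (fun p : Fin m × Fin m => p.1 < p.2),
          ((b p.2 : ℤ) - (b p.1 : ℤ))) *
        ∏ j : Fin m, ((b j).factorial : ℤ) := by
  set p : Fin m → ℤ[X] := fun i => (ascPochhammer ℤ (i : ℕ)).comp (X + C 1) with hp
  have h_monic : ∀ i, (p i).Monic := fun i => Polynomial.Monic.comp_X_add_C (monic_ascPochhammer ℤ _) 1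
  have h_deg : ∀ i : Fin m, (p i).natDegree = (i : ℕ) := by
    intro i
    rw [hp, natDegree_comp, ascPochhammer_natDegree, natDegree_X_add_C, mul_one]
  have key : ∀ i j : Fin m, ((b j + (i : ℕ)).factorial : ℤ) =
      ((b j).factorial : ℤ) * (p i).eval ((b j : ℤ)) := by
    intro i j
    rw [hp, eval_comp]
    simp only [eval_add, eval_X, eval_C]
    rw [show ((b j : ℤ) + 1) = (((b j + 1 : ℕ) : ℤ)) by push_cast; ring]
    rw [← ascPochhammer_eval_cast, ascPochhammer_nat_eq_ascFactorial]
    rw [← Nat.cast_mul, Nat.factorial_mul_ascFactorial]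
  rw [← Matrix.det_transpose]
  have : (Matrix.of fun i j : Fin m => (((b j + (i : ℕ)).factorial : ℤ)))ᵀ =
      Matrix.of (fun i j : Fin m => ((b i).factorial : ℤ) *
        (Matrix.of fun i j : Fin m => (p j).eval ((b i : ℤ))) i j) := by
    ext i j
    exact key j i
  rw [this, Matrix.det_mul_column,
    ← Matrix.det_eval_matrixOfPolynomials_eq_det_vandermonde (fun i => ((b i : ℤ))) p h_deg
      h_monic,
    Matrix.det_vandermonde, prod_pairs_eq (fun i j => ((b j : ℤ) - (b i : ℤ))), mul_comm]
end

section
/- Let m ≥ 1, let q_1,…,q_m be real numbers, let λ > 0 be real, and let a ≥ 0 be an integer. Then Σ_{N=0}^{a} (λ^N / N!) · Σ_{(r_1,…,r_N): r_i ≥ 1, r_1+⋯+r_N = a} ∏_{i=1}^{N} ( (q_1^{r_i} + ⋯ + q_m^{r_i}) / r_i ) = Σ_{(a_1,…,a_m) ∈ ℕ^m, a_1+⋯+a_m = a} ∏_{j=1}^{m} λ^{(a_j)} q_j^{a_j} / a_j!. (This is the coefficient of x^a in the paper's formal power series identity Σ_{N≥0} (λ^N/N!) (Σ_{j=1}^m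 Σ_{r≥1} q_j^r x^r / r)^N = ∏_{j=1}^m Σ_{a_j ≥ 0} (Γ(λ+a_j)/(a_j! Γ(λ))) q_j^{a_j} x^{a_j}; for N = 0 the inner sum over compositions is 1 if a = 0 and 0 otherwise.) -/
/-!
Both sides are the coefficient of `X ^ a` in a power series: the left side in
`exp (λ L)` with `L = ∑ⱼ -log (1 - qⱼ X)`, the right side in `∏ⱼ (1 - qⱼ X) ^ (-λ)`.
Both series have constant term `1` and solve the linear equation `G' = λ L' G`: for the
exponential by the chain rule, for the product because each factor `B` satisfies
`(1 - q X) B' = λ q B` and `(1 - q X) (-log (1 - q X))' = q`. Two such solutions agree,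
since their quotient has derivative zero.
-/

open Finset PowerSeries

theorem Derivation.map_prod_of_map_eq_mul {R A ι : Type*} [CommSemiring R] [CommSemiring A]
    [Algebra R A] (D : Derivation R A A) (s : Finset ι) (g e : ι → A)
    (h : ∀ j ∈ s, D (g j) = e j * g j) :
    D (∏ j ∈ s, g j) = (∑ j ∈ s, e j) * ∏ j ∈ s, g j := by
  induction s using Finset.cons_induction with
  | empty => simp
  | cons j s hj ih =>
    rw [prod_cons, sum_cons, Derivation.leibniz, h j (mem_cons_self j s),
      ih fun i hi => h i (mem_cons_of_mem hi), smul_eq_mul, smul_eq_mul]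
    ring

namespace PowerSeries

section CommSemiring

variable {R : Type*} [CommSemiring R]

theorem coeff_prod_fin_eq_sum_antidiagonalTuple {M : ℕ} (f : Fin M → R⟦X⟧) (n : ℕ) :
    coeff n (∏ j, f j) = ∑ b ∈ Nat.antidiagonalTuple M n, ∏ j, coeff (b j) (f j) := by
  classical
  rw [coeff_prod, ← piAntidiag_univ_fin_eq_antidiagonalTuple, finsuppAntidiag, sum_map,
    ← sum_attach (piAntidiag univ n)]
  rfl

theorem coeff_pow_eq_sum_compositions {φ : R⟦X⟧} (hφ : constantCoeff φ = 0) (N n : ℕ) :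
    coeff n (φ ^ N) =
      ∑ c ∈ (Nat.antidiagonalTuple N n).filter (fun c => ∀ i, 0 < c i), ∏ i, coeff (c i) φ := by
  rw [← Fin.prod_const N φ, coeff_prod_fin_eq_sum_antidiagonalTuple, sum_filter_of_ne]
  intro c _ hc i
  by_contra! hci
  refine hc (prod_eq_zero (mem_univ i) ?_)
  rwa [Nat.le_zero.mp hci, coeff_zero_eq_constantCoeff_apply]

theorem coeff_pow_eq_zero_of_lt {φ : R⟦X⟧} (hφ : constantCoeff φ = 0) {n N : ℕ} (h : n < N) :
    coeff n (φ ^ N) = 0 :=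
  X_pow_dvd_iff.mp (pow_dvd_pow_of_dvd (X_dvd_iff.mpr hφ) N) n h

end CommSemiring

section CommRing

variable {R : Type*} [CommRing R] (q : R) (F : R⟦X⟧)

theorem coeff_zero_one_sub_C_mul_X_mul : coeff 0 ((1 - C q * X) * F) = coeff 0 F := by
  rw [sub_mul, one_mul, map_sub, mul_assoc, coeff_C_mul, coeff_zero_X_mul, mul_zero, sub_zero]

theorem coeff_succ_one_sub_C_mul_X_mul (n : ℕ) :
    coeff (n + 1) ((1 - C q * X) * F) = coeff (n + 1) F - q * coeff n F := by
  rw [sub_mul, one_mul, map_sub, mul_assoc, coeff_C_mul, coeff_succ_X_mul]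

end CommRing

section ExpSubst

variable {A : Type*} [CommRing A] [Algebra ℚ A] {φ : A⟦X⟧}

theorem coeff_exp_subst (hφ : constantCoeff φ = 0) (n : ℕ) :
    coeff n ((exp A).subst φ) =
      ∑ N ∈ range (n + 1), algebraMap ℚ A (1 / N.factorial) * coeff n (φ ^ N) := by
  rw [coeff_subst' (HasSubst.of_constantCoeff_zero' hφ),
    finsum_eq_sum_of_support_subset (s := range (n + 1))]
  · simp [coeff_exp, smul_eq_mul]
  · intro N hN
    by_contra h
    simp only [coe_range, Set.mem_Iio, not_lt] at h
    simp [coeff_pow_eq_zero_of_lt hφ (Nat.lt_of_succ_le h)] at hN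

theorem constantCoeff_exp_subst (hφ : constantCoeff φ = 0) :
    constantCoeff ((exp A).subst φ) = 1 := by
  rw [← coeff_zero_eq_constantCoeff_apply, coeff_exp_subst hφ]
  simp

theorem derivative_exp_subst (hφ : constantCoeff φ = 0) :
    d⁄dX A ((exp A).subst φ) = d⁄dX A φ * (exp A).subst φ := by
  rw [derivative_subst (HasSubst.of_constantCoeff_zero' hφ), derivative_exp, mul_comm]

end ExpSubst

section Field

variable {K : Type*} [Field K]

/-- `-log (1 - q X)`; its constant coefficient is the junk value `q ^ 0 / 0 = 0`. -/
noncomputable def negLogOneSub (q : K) : K⟦X⟧ :=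
  mk fun r => q ^ r / r

/-- `(1 - q X) ^ (-c)`. -/
noncomputable def negBinomialSeries (c q : K) : K⟦X⟧ :=
  mk fun n => (∏ i ∈ range n, (c + i)) * q ^ n / n.factorial

variable (c q : K)

@[simp]
theorem constantCoeff_negLogOneSub : constantCoeff (negLogOneSub q) = 0 := by
  simp [negLogOneSub, ← coeff_zero_eq_constantCoeff_apply]

@[simp]
theorem constantCoeff_negBinomialSeries : constantCoeff (negBinomialSeries c q) = 1 := by
  simp [negBinomialSeries, ← coeff_zero_eq_constantCoeff_apply]

variable [CharZero K]

theorem eq_of_derivative_eq_mul_self {H G₁ G₂ : K⟦X⟧} (h₁ : d⁄dX K G₁ = H * G₁)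
    (h₂ : d⁄dX K G₂ = H * G₂) (h₀ : constantCoeff G₁ = constantCoeff G₂)
    (hG₂ : constantCoeff G₂ ≠ 0) : G₁ = G₂ := by
  have hinv := PowerSeries.inv_mul_cancel G₂ hG₂
  have hquot : G₁ * G₂⁻¹ = 1 := by
    refine derivative.ext ?_ ?_
    · rw [Derivation.leibniz, derivative_inv', h₁, h₂, derivative_one, smul_eq_mul, smul_eq_mul]
      linear_combination (-G₁ * G₂⁻¹ * H) * hinv
    · rw [map_mul, map_one, h₀, ← map_mul, PowerSeries.mul_inv_cancel G₂ hG₂, map_one]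
  simpa using ((eq_mul_inv_iff_mul_eq hG₂).mp hquot.symm).symm

theorem derivative_negLogOneSub : d⁄dX K (negLogOneSub q) = mk fun n => q ^ (n + 1) := by
  ext n
  rw [coeff_derivative, negLogOneSub, coeff_mk, coeff_mk, Nat.cast_add_one,
    div_mul_cancel₀ _ (Nat.cast_add_one_ne_zero n)]

theorem one_sub_C_mul_X_mul_derivative_negLogOneSub :
    (1 - C q * X) * d⁄dX K (negLogOneSub q) = C q := by
  rw [derivative_negLogOneSub]
  ext (_ | n)
  · simp [coeff_zero_one_sub_C_mul_X_mul]
  · rw [coeff_succ_one_sub_C_mul_X_mul, coeff_mk, coeff_mk, coeff_C, if_neg n.succ_ne_zero,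
      pow_succ' q (n + 1), sub_self]

theorem one_sub_C_mul_X_mul_derivative_negBinomialSeries :
    (1 - C q * X) * d⁄dX K (negBinomialSeries c q) = C (c * q) * negBinomialSeries c q := by
  ext (_ | n)
  · simp [coeff_zero_one_sub_C_mul_X_mul, negBinomialSeries, coeff_derivative]
  · rw [coeff_succ_one_sub_C_mul_X_mul, coeff_C_mul]
    simp only [negBinomialSeries, coeff_derivative, coeff_mk, prod_range_succ _ (n + 1),
      Nat.factorial_succ (n + 1)]
    have h₁ : ((n + 1).factorial : K) ≠ 0 := Nat.cast_ne_zero.mpr (Nat.factorial_ne_zero _)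
    have h₂ : (n + 1 + 1 : K) ≠ 0 := by exact_mod_cast Nat.succ_ne_zero (n + 1)
    push_cast
    field_simp
    ring

theorem derivative_negBinomialSeries :
    d⁄dX K (negBinomialSeries c q) = (c • d⁄dX K (negLogOneSub q)) * negBinomialSeries c q := by
  have hne : (1 - C q * X : K⟦X⟧) ≠ 0 := fun h => by
    simpa using congrArg constantCoeff h
  refine mul_left_cancel₀ hne ?_
  rw [one_sub_C_mul_X_mul_derivative_negBinomialSeries, smul_mul_assoc, mul_smul_comm,
    ← mul_assoc, one_sub_C_mul_X_mul_derivative_negLogOneSub, smul_eq_C_mul, ← mul_assoc,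
    ← map_mul]

theorem exp_subst_smul_sum_negLogOneSub {ι : Type*} (s : Finset ι) (q : ι → K) :
    (exp K).subst (c • ∑ j ∈ s, negLogOneSub (q j)) = ∏ j ∈ s, negBinomialSeries c (q j) := by
  have hL : constantCoeff (c • ∑ j ∈ s, negLogOneSub (q j)) = 0 := by simp
  refine eq_of_derivative_eq_mul_self (derivative_exp_subst hL) ?_
    (by simp [constantCoeff_exp_subst hL]) (by simp)
  rw [Derivation.map_prod_of_map_eq_mul _ s _ _ fun j _ => derivative_negBinomialSeries c (q j),
    Derivation.map_smul, map_sum, smul_sum]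

end Field

end PowerSeries

theorem coeff_exp_log_identity_general (m : ℕ) (q : Fin m → ℝ) (lam : ℝ) (a : ℕ) :
    (∑ N ∈ Finset.range (a + 1), lam ^ N / (N.factorial : ℝ) *
        ∑ c ∈ (Finset.Nat.antidiagonalTuple N a).filter (fun c => ∀ i, 0 < c i),
          ∏ i : Fin N, ((∑ j : Fin m, q j ^ c i) / (c i : ℝ))) =
      ∑ b ∈ Finset.Nat.antidiagonalTuple m a,
        ∏ j : Fin m,
          ((∏ i ∈ Finset.range (b j), (lam + (i : ℝ))) * q j ^ b j / ((b j).factorial : ℝ)) := by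
  have hL : constantCoeff (∑ j, negLogOneSub (q j)) = 0 := by simp
  have key := congrArg (coeff a) (exp_subst_smul_sum_negLogOneSub lam univ q)
  rw [coeff_exp_subst (by simp), coeff_prod_fin_eq_sum_antidiagonalTuple] at key
  simp only [negBinomialSeries, coeff_mk] at key
  convert key using 2 with N
  rw [smul_pow, coeff_smul, coeff_pow_eq_sum_compositions hL]
  simp only [negLogOneSub, coeff_mk, map_sum, sum_div, one_div, map_inv₀, map_natCast,
    smul_eq_mul]
  ring

/-- Coefficient of `x^a` in the formal power series identity
`Σ_N (λ^N/N!) (Σ_j Σ_{r≥1} q_j^r x^r / r)^N = ∏_j Σ_{a_j} λ^{(a_j)} q_j^{a_j} x^{a_j}/a_j!`: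
the left-hand inner sum is over compositions of `a` into `N` positive parts, and
`λ^{(k)} = λ(λ+1)⋯(λ+k-1)` is the ascending factorial. -/
theorem coeff_exp_log_identity (m : ℕ) (hm : 1 ≤ m) (q : Fin m → ℝ) (lam : ℝ)
    (hlam : 0 < lam) (a : ℕ) :
    (∑ N ∈ Finset.range (a + 1), lam ^ N / (N.factorial : ℝ) *
        ∑ c ∈ (Finset.Nat.antidiagonalTuple N a).filter (fun c => ∀ i, 0 < c i),
          ∏ i : Fin N, ((∑ j : Fin m, q j ^ c i) / (c i : ℝ))) =
      ∑ b ∈ Finset.Nat.antidiagonalTuple m a,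
        ∏ j : Fin m,
          ((∏ i ∈ Finset.range (b j), (lam + (i : ℝ))) * q j ^ b j / ((b j).factorial : ℝ)) :=
  coeff_exp_log_identity_general m q lam a
end
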